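/- For all μ, p ∈ [0,1] and n ≥ 1, the expected fraction of infected vertices over the class of 1-half-regular balanced bipartite graphs on 2n vertices, in the (μ,p) infection model, is minimized either by the perfect matching or by an n-star together with n-1 isolated vertices in L. -/

import Mathlib

/-!
A star with `k` leaves raises the infected count above the isolated-vertex baseline `μ` by
`k * r k`, where `r k = μ + p - μp + (1 - μ) ψ k` and `ψ k = (1 - q^k)/k - c q^(k-1)` with
`q = 1 - μp`, `c = (1 - μ)p`. The infected fraction is therefore a size-weighted average of `r`
over the stars, and it suffices that `r` is minimised on `{1, …, n}` at `1` or at `n`.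
This holds because `ψ` is unimodal: writing `Δ i = ψ (i+1) - ψ (i+2)`, one has
`(i+1)(i+2)(i+3) Δ (i+1) = K_i(q) + (i+1)(i+2)(i+3) q Δ i` with a polynomial `K_i ≥ 0` on
`[0, 1]` (the `c`-terms cancel), so once `ψ` decreases it keeps decreasing.
-/

noncomputable def Lprob (μ p : ℝ) (j : ℕ) : ℝ := 1 - (1 - μ) * (1 - μ * p) ^ j

noncomputable def Rprob (μ p : ℝ) (j : ℕ) : ℝ :=
  μ + p - μ * p - (1 - μ) ^ 2 * p * (1 - μ * p) ^ (j - 1)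

/-- Expected infected fraction of a 1-half-regular balanced bipartite graph on
`2n` vertices whose stars (centered in `L`) have sizes given by the list `ks`:
the star centers and leaves contribute `L_k + k·R_k` each, and the
`n - ks.length` unused `L`-vertices are isolated, contributing `L_0`. -/
noncomputable def infectedFraction (μ p : ℝ) (n : ℕ) (ks : List ℕ) : ℝ :=
  ((ks.map (fun k => Lprob μ p k + (k : ℝ) * Rprob μ p k)).sum
    + ((n : ℝ) - ks.length) * Lprob μ p 0) / (2 * n)

theorem min_le_of_descent_persists {α : Type*} [LinearOrder α] {f : ℕ → α}
    (hf : ∀ k, f (k + 1) ≤ f k → f (k + 2) ≤ f (k + 1)) {k n : ℕ} (hkn : k ≤ n) :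
    min (f 0) (f n) ≤ f k := by
  induction k with
  | zero => exact min_le_left _ _
  | succ k ih =>
    rcases le_total (f k) (f (k + 1)) with hup | hdown
    · exact (ih (by omega)).trans hup
    · have hanti : ∀ m ≥ k, f (m + 1) ≤ f m := fun m hm => by
        induction m, hm using Nat.le_induction with
        | base => exact hdown
        | succ m _ ih => exact hf m ih
      exact (min_le_right _ _).trans
        (antitoneOn_nat_Ici_of_succ_le hanti (Nat.le_succ k) (Nat.le_of_succ_le hkn) hkn)

noncomputable def psi (q c : ℝ) (k : ℕ) : ℝ := (1 - q ^ k) / k - c * q ^ (k - 1)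

theorem descent_poly_nonneg {q : ℝ} (hq0 : 0 ≤ q) (hq1 : q ≤ 1) (j : ℕ) :
    0 ≤ (j + 1 : ℝ) - (j + 3) * q + (j + 3) * q ^ (j + 2) - (j + 1) * q ^ (j + 3) := by
  induction j with
  | zero => norm_num; nlinarith [pow_nonneg (sub_nonneg.2 hq1) 3]
  | succ j ih =>
    have bernoulli : 0 ≤ (j + 2 : ℝ) - (j + 3) * q + q ^ (j + 3) := by
      have := one_add_mul_sub_le_pow (by linarith : (-1 : ℝ) ≤ q) (j + 3)
      push_cast at this
      linarith
    have key : (j + 1 + 1 : ℝ) - (j + 1 + 3) * q + (j + 1 + 3) * q ^ (j + 1 + 2)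
        - (j + 1 + 1) * q ^ (j + 1 + 3)
        = q * ((j + 1 : ℝ) - (j + 3) * q + (j + 3) * q ^ (j + 2) - (j + 1) * q ^ (j + 3))
          + (1 - q) * ((j + 2 : ℝ) - (j + 3) * q + q ^ (j + 3)) := by ring
    push_cast
    rw [key]
    exact add_nonneg (mul_nonneg hq0 ih) (mul_nonneg (sub_nonneg.2 hq1) bernoulli)

theorem psi_descent_identity (q c : ℝ) (i : ℕ) :
    ((i + 1) * (i + 2) * (i + 3) : ℝ) * (psi q c (i + 2) - psi q c (i + 3))
      = ((i + 1 : ℝ) - (i + 3) * q + (i + 3) * q ^ (i + 2) - (i + 1) * q ^ (i + 3))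
        + ((i + 1) * (i + 2) * (i + 3) : ℝ) * q * (psi q c (i + 1) - psi q c (i + 2)) := by
  simp only [psi, Nat.add_sub_cancel]
  push_cast
  field_simp
  ring

theorem psi_descent_persists {q : ℝ} (c : ℝ) (hq0 : 0 ≤ q) (hq1 : q ≤ 1) (i : ℕ)
    (h : psi q c (i + 2) ≤ psi q c (i + 1)) : psi q c (i + 3) ≤ psi q c (i + 2) := by
  have hpos : (0 : ℝ) < (i + 1) * (i + 2) * (i + 3) := by positivity
  have hrhs := add_nonneg (descent_poly_nonneg hq0 hq1 i)
    (mul_nonneg (mul_nonneg hpos.le hq0) (sub_nonneg.2 h))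
  rw [← psi_descent_identity] at hrhs
  exact sub_nonneg.1 (nonneg_of_mul_nonneg_right (by linarith) hpos)

theorem min_psi_le {q : ℝ} (c : ℝ) (hq0 : 0 ≤ q) (hq1 : q ≤ 1) {k n : ℕ} (hk : 1 ≤ k)
    (hkn : k ≤ n) : min (psi q c 1) (psi q c n) ≤ psi q c k := by
  obtain ⟨k, rfl⟩ := Nat.exists_eq_add_of_le' hk
  obtain ⟨n, rfl⟩ := Nat.exists_eq_add_of_le' (hk.trans hkn)
  exact min_le_of_descent_persists (f := fun i => psi q c (i + 1))
    (psi_descent_persists c hq0 hq1) (by omega)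

noncomputable def starRate (μ p : ℝ) (k : ℕ) : ℝ :=
  μ + p - μ * p + (1 - μ) * psi (1 - μ * p) ((1 - μ) * p) k

theorem Lprob_add_mul_Rprob (μ p : ℝ) (k : ℕ) :
    Lprob μ p k + k * Rprob μ p k = μ + k * starRate μ p k := by
  rcases Nat.eq_zero_or_pos k with rfl | hk
  · simp [Lprob]
  · have hk0 : (k : ℝ) ≠ 0 := by positivity
    unfold Lprob Rprob starRate psi
    field_simp
    ring

theorem min_starRate_le {μ p : ℝ} (hμ0 : 0 ≤ μ) (hμ1 : μ ≤ 1) (hp0 : 0 ≤ p) (hp1 : p ≤ 1)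
    {k n : ℕ} (hk : 1 ≤ k) (hkn : k ≤ n) :
    min (starRate μ p 1) (starRate μ p n) ≤ starRate μ p k := by
  have hmono : Monotone fun x => μ + p - μ * p + (1 - μ) * x :=
    fun x y hxy => by simp only; gcongr
  rw [starRate, starRate, ← hmono.map_min]
  exact hmono (min_psi_le _ (by nlinarith) (by nlinarith) hk hkn)

theorem infectedFraction_eq (μ p : ℝ) (n : ℕ) (ks : List ℕ) :
    infectedFraction μ p n ks
      = ((ks.map fun k : ℕ => (k : ℝ) * starRate μ p k).sum + n * μ) / (2 * n) := by
  have hL0 : Lprob μ p 0 = μ := by simp [Lprob]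
  simp only [infectedFraction, Lprob_add_mul_Rprob, List.sum_map_add, hL0, List.map_const',
    List.sum_replicate, nsmul_eq_mul]
  ring

theorem matching_or_star_optimal_general (μ p : ℝ) (hμ0 : 0 ≤ μ) (hμ1 : μ ≤ 1)
    (hp0 : 0 ≤ p) (hp1 : p ≤ 1) (n : ℕ)
    (ks : List ℕ) (hsum : ks.sum = n) :
    min (infectedFraction μ p n (List.replicate n 1))
        (infectedFraction μ p n [n]) ≤ infectedFraction μ p n ks := by
  set r := min (starRate μ p 1) (starRate μ p n)
  have hpointwise : ∀ k ∈ ks, (k : ℝ) * r ≤ k * starRate μ p k := by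
    intro k hk
    rcases Nat.eq_zero_or_pos k with rfl | hk1
    · simp
    · exact mul_le_mul_of_nonneg_left
        (min_starRate_le hμ0 hμ1 hp0 hp1 hk1 (hsum ▸ List.le_sum_of_mem hk)) (by positivity)
  have hsum_ge : (n : ℝ) * r ≤ (ks.map fun k : ℕ => (k : ℝ) * starRate μ p k).sum := by
    rw [← hsum, Nat.cast_list_sum, ← List.sum_map_mul_right]
    exact List.sum_le_sum hpointwise
  have hmono : Monotone fun x : ℝ => (n * x + n * μ) / (2 * n) :=
    fun x y hxy => by simp only; gcongr
  calc min (infectedFraction μ p n (List.replicate n 1)) (infectedFraction μ p n [n])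
      = (n * r + n * μ) / (2 * n) := by
        rw [hmono.map_min, infectedFraction_eq, infectedFraction_eq]
        simp
    _ ≤ infectedFraction μ p n ks := by
        rw [infectedFraction_eq]
        gcongr

/-- Among all 1-half-regular balanced bipartite graphs on `2n` vertices
(equivalently, all lists of positive star sizes summing to `n`), the expected
infected fraction in the `(μ,p)` model is minimized either by the perfect
matching (`n` stars of size 1) or by an `n`-star with `n-1` isolated vertices. -/
theorem matching_or_star_optimal (μ p : ℝ) (hμ0 : 0 ≤ μ) (hμ1 : μ ≤ 1)
    (hp0 : 0 ≤ p) (hp1 : p ≤ 1) (n : ℕ) (hn : 1 ≤ n)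
    (ks : List ℕ) (hpos : ∀ k ∈ ks, 1 ≤ k) (hsum : ks.sum = n) :
    min (infectedFraction μ p n (List.replicate n 1))
        (infectedFraction μ p n [n]) ≤ infectedFraction μ p n ks :=
  matching_or_star_optimal_general μ p hμ0 hμ1 hp0 hp1 n ks hsum
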